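/- arXiv:1803.10816 — 2 statements merged into one kernel-verified Lean document; each statement's English description precedes it below -/
import Mathlib

section
/- Let n, m be positive integers with m > 1 having prime factorization m = p₁^{s₁}···p_t^{s_t}, and write n = a·b where a is the largest divisor of n coprime to m. Then lim_{k→∞} I(x, n·m^k) = I(x,a) · ∏_{i=1}^{t} p_i^x/(p_i^x − 1). -/
/-!
The abundancy index `Ir x` is multiplicative. Maximality of `a` forces every prime factor of `b`
to divide `m`, so `n * m ^ k = a * ∏ pᵢ ^ (eᵢ + k sᵢ)` with `a` coprime to every `pᵢ`. Since
`Ir x N = ∑_{d ∣ N} d⁻ˣ`, each factor `Ir x (pᵢ ^ e)` is a partial sum of the geometric series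
`∑ pᵢ^(-jx) = pᵢˣ / (pᵢˣ - 1)`, and the exponents `eᵢ + k sᵢ` tend to infinity.
-/

open Finset Nat Filter Topology

/-- Sum of x-th powers of divisors. -/
def sigmaX (x n : ℕ) : ℕ := ∑ d ∈ n.divisors, d ^ x

/-- The x-th abundancy index as a real number. -/
noncomputable def Ir (x n : ℕ) : ℝ := (sigmaX x n : ℝ) / (n : ℝ) ^ x

open ArithmeticFunction
open scoped ArithmeticFunction.sigma

lemma sigmaX_eq_sigma (x n : ℕ) : sigmaX x n = σ x n := by
  simp [sigmaX, sigma_apply]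

lemma Ir_mul_of_coprime (x : ℕ) {u v : ℕ} (h : u.Coprime v) :
    Ir x (u * v) = Ir x u * Ir x v := by
  rw [Ir, Ir, Ir, sigmaX_eq_sigma, sigmaX_eq_sigma, sigmaX_eq_sigma,
    isMultiplicative_sigma.map_mul_of_coprime h, Nat.cast_mul, Nat.cast_mul, mul_pow,
    mul_div_mul_comm]

open scoped Function in
lemma Ir_prod_of_pairwise_coprime (x : ℕ) {ι : Type*} (s : Finset ι) (g : ι → ℕ)
    (h : (s : Set ι).Pairwise (Coprime on g)) :
    Ir x (∏ i ∈ s, g i) = ∏ i ∈ s, Ir x (g i) := by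
  simp only [Ir, sigmaX_eq_sigma]
  rw [isMultiplicative_sigma.map_prod g s h, Nat.cast_prod, Nat.cast_prod, ← Finset.prod_pow,
    ← Finset.prod_div_distrib]

lemma Ir_eq_sum_inv_pow {n : ℕ} (hn : n ≠ 0) (x : ℕ) :
    Ir x n = ∑ d ∈ n.divisors, ((d : ℝ) ^ x)⁻¹ := by
  rw [Ir, sigmaX, ← sum_div_divisors, Nat.cast_sum, Finset.sum_div]
  refine Finset.sum_congr rfl fun d hd => ?_
  have hd0 : (d : ℝ) ≠ 0 := by exact_mod_cast (Nat.pos_of_mem_divisors hd).ne'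
  have hn0 : (n : ℝ) ≠ 0 := by exact_mod_cast hn
  rw [Nat.cast_pow, Nat.cast_div (Nat.dvd_of_mem_divisors hd) hd0, div_pow,
    div_div_cancel_left' (pow_ne_zero x hn0)]

lemma Ir_prime_pow (x : ℕ) {q : ℕ} (hq : q.Prime) (e : ℕ) :
    Ir x (q ^ e) = ∑ i ∈ range (e + 1), ((q : ℝ) ^ x)⁻¹ ^ i := by
  rw [Ir_eq_sum_inv_pow (pow_ne_zero e hq.ne_zero), sum_divisors_prime_pow hq]
  simp only [Nat.cast_pow, ← pow_mul, mul_comm, inv_pow]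

lemma tendsto_Ir_prime_pow {x : ℕ} (hx : x ≠ 0) {q : ℕ} (hq : q.Prime) :
    Tendsto (fun e => Ir x (q ^ e)) atTop (𝓝 ((q : ℝ) ^ x / ((q : ℝ) ^ x - 1))) := by
  have hr : (1 : ℝ) < (q : ℝ) ^ x := one_lt_pow₀ (by exact_mod_cast hq.one_lt) hx
  have hgeom :=
    (hasSum_geometric_of_lt_one (by positivity) (inv_lt_one_of_one_lt₀ hr)).tendsto_sum_nat
  have hlim : (1 - ((q : ℝ) ^ x)⁻¹)⁻¹ = (q : ℝ) ^ x / ((q : ℝ) ^ x - 1) := by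
    field_simp
  rw [← hlim]
  simpa only [Ir_prime_pow x hq] using (tendsto_add_atTop_iff_nat 1).2 hgeom

lemma Ir_mul_prod_prime_pow (x : ℕ) {ι : Type*} [Fintype ι] {p : ι → ℕ}
    (hp : ∀ i, (p i).Prime) (hinj : Function.Injective p) {a : ℕ}
    (ha : ∀ i, a.Coprime (p i)) (E : ι → ℕ) :
    Ir x (a * ∏ i, p i ^ E i) = Ir x a * ∏ i, Ir x (p i ^ E i) := by
  rw [Ir_mul_of_coprime x (Nat.Coprime.prod_right fun i _ => (ha i).pow_right _),
    Ir_prod_of_pairwise_coprime x]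
  exact fun i _ j _ hij =>
    ((Nat.coprime_primes (hp i) (hp j)).2 (hinj.ne hij)).pow _ _

lemma tendsto_Ir_mul_prod_prime_pow {x : ℕ} (hx : x ≠ 0) {ι : Type*} [Fintype ι] {p : ι → ℕ}
    (hp : ∀ i, (p i).Prime) (hinj : Function.Injective p) {a : ℕ}
    (ha : ∀ i, a.Coprime (p i)) {E : ℕ → ι → ℕ} (hE : ∀ i, Tendsto (E · i) atTop atTop) :
    Tendsto (fun k => Ir x (a * ∏ i, p i ^ E k i)) atTop
      (𝓝 (Ir x a * ∏ i, (p i : ℝ) ^ x / ((p i : ℝ) ^ x - 1))) := by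
  simp only [Ir_mul_prod_prime_pow x hp hinj ha]
  exact tendsto_const_nhds.mul
    (tendsto_finsetProd _ fun i _ => (tendsto_Ir_prime_pow hx (hp i)).comp (hE i))

lemma exists_eq_of_prime_dvd_prod_pow {ι : Type*} {s : Finset ι} {p e : ι → ℕ}
    (hp : ∀ i, (p i).Prime) {q : ℕ} (hq : q.Prime) (h : q ∣ ∏ i ∈ s, p i ^ e i) :
    ∃ i ∈ s, p i = q := by
  obtain ⟨i, hi, hdvd⟩ := (Prime.dvd_finsetProd_iff hq.prime _).1 h
  exact ⟨i, hi, ((Nat.prime_dvd_prime_iff_eq hq (hp i)).1 (hq.dvd_of_dvd_pow hdvd)).symm⟩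

lemma eq_prod_pow_factorization_of_primeFactors_subset {ι : Type*} [Fintype ι] {p : ι → ℕ}
    (hinj : Function.Injective p) {b : ℕ} (hb : b ≠ 0)
    (h : b.primeFactors ⊆ univ.image p) :
    b = ∏ i, p i ^ b.factorization (p i) := by
  classical
  conv_lhs => rw [prod_primeFactors_pow_factorization hb]
  rw [prod_subset h fun q _ hq => by
    rw [← support_factorization, Finsupp.notMem_support_iff] at hq
    rw [hq, pow_zero],
    prod_image fun i _ j _ hij => hinj hij]

lemma prime_dvd_of_dvd_cofactor_of_maximal {n m a b : ℕ} (hn : n ≠ 0) (hab : n = a * b)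
    (hcop : a.gcd m = 1) (hmax : ∀ a' : ℕ, a' ∣ n → a'.gcd m = 1 → a' ≤ a)
    {q : ℕ} (hq : q.Prime) (hqb : q ∣ b) : q ∣ m := by
  by_contra hqm
  have ha : 0 < a := Nat.pos_of_ne_zero (left_ne_zero_of_mul (hab ▸ hn))
  have hle : a * q ≤ a := hmax (a * q) (hab ▸ mul_dvd_mul_left a hqb)
    (Nat.Coprime.mul_left hcop ((hq.coprime_iff_not_dvd).2 hqm))
  nlinarith [hq.two_le]

theorem stmt_5_general (x n m t : ℕ) (hx : 0 < x) (hn : 0 < n)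
    (p : Fin t → ℕ) (s : Fin t → ℕ)
    (hp : ∀ i, (p i).Prime) (hinj : Function.Injective p)
    (hs : ∀ i, 0 < s i) (hfac : m = ∏ i, p i ^ s i)
    (a b : ℕ) (hab : n = a * b) (hcop : Nat.gcd a m = 1)
    (hmax : ∀ a' : ℕ, a' ∣ n → Nat.gcd a' m = 1 → a' ≤ a) :
    Tendsto (fun k : ℕ => Ir x (n * m ^ k)) atTop
      (𝓝 (Ir x a * ∏ i, (p i : ℝ) ^ x / ((p i : ℝ) ^ x - 1))) := by
  have hb : b ≠ 0 := right_ne_zero_of_mul (hab ▸ hn.ne')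
  obtain ⟨e, hb_eq⟩ : ∃ e : Fin t → ℕ, b = ∏ i, p i ^ e i := by
    refine ⟨_, eq_prod_pow_factorization_of_primeFactors_subset hinj hb fun q hq => ?_⟩
    have hqm : q ∣ m := prime_dvd_of_dvd_cofactor_of_maximal hn.ne' hab hcop hmax
      (prime_of_mem_primeFactors hq) (dvd_of_mem_primeFactors hq)
    obtain ⟨i, -, rfl⟩ := exists_eq_of_prime_dvd_prod_pow hp (prime_of_mem_primeFactors hq)
      (hfac ▸ hqm)
    exact mem_image_of_mem p (mem_univ i)
  have hsplit : ∀ k, n * m ^ k = a * ∏ i, p i ^ (e i + k * s i) := by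
    intro k
    rw [hab, hfac, mul_assoc, hb_eq, ← prod_pow, ← prod_mul_distrib]
    simp only [← pow_mul, ← pow_add, mul_comm k]
  have hpm : ∀ i, p i ∣ m := fun i =>
    hfac ▸ (dvd_pow_self _ (hs i).ne').trans (dvd_prod_of_mem _ (mem_univ i))
  simp only [hsplit]
  exact tendsto_Ir_mul_prod_prime_pow hx.ne' hp hinj
    (fun i => Nat.Coprime.coprime_dvd_right (hpm i) hcop)
    fun i => tendsto_atTop_mono (fun _ => Nat.le_add_left _ _)
      (tendsto_id.atTop_mul_const' (hs i))

theorem stmt_5 (x n m t : ℕ) (hx : 0 < x) (hn : 0 < n) (hm : 1 < m)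
    (p : Fin t → ℕ) (s : Fin t → ℕ)
    (hp : ∀ i, (p i).Prime) (hinj : Function.Injective p)
    (hs : ∀ i, 0 < s i) (hfac : m = ∏ i, p i ^ s i)
    (a b : ℕ) (hab : n = a * b) (hadvd : a ∣ n) (hcop : Nat.gcd a m = 1)
    (hmax : ∀ a' : ℕ, a' ∣ n → Nat.gcd a' m = 1 → a' ≤ a) :
    Tendsto (fun k : ℕ => Ir x (n * m ^ k)) atTop
      (𝓝 (Ir x a * ∏ i, (p i : ℝ) ^ x / ((p i : ℝ) ^ x - 1))) :=
  stmt_5_general x n m t hx hn p s hp hinj hs hfac a b hab hcop hmax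
end

section
/- For every prime p and integer x > 1, the rational I(x, p) = (1 + p^x)/p^x is an abundancy outlaw (i.e., there is no positive integer n with σ(n)/n = (1+p^x)/p^x), yet it is an x-th abundancy index. -/
open Finset Nat

/-- The x-th abundancy index as a rational number. -/
def Iq (x n : ℕ) : ℚ := (sigmaX x n : ℚ) / (n : ℚ) ^ x

/-!
Since `a` and `1 + a` are coprime, `σ(n) / n = (1 + a) / a` forces `n = a m` and
`σ(n) = (1 + a) m`. If `a` has a divisor `1 < d < a`, then `m`, `d m` and `a m` are distinct
divisors of `n`, so `σ(n) ≥ m + d m + a m > (1 + a) m`. This applies to `a = p ^ x` with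
`x > 1`, while for `x`-th powers of divisors `n = p` itself attains `(1 + p ^ x) / p ^ x`.
-/

theorem sigmaX_prime {p : ℕ} (hp : p.Prime) (x : ℕ) : sigmaX x p = 1 + p ^ x := by
  rw [sigmaX, hp.divisors, sum_insert (by simp [hp.one_lt.ne]), sum_singleton, one_pow]

theorem Iq_prime {p : ℕ} (hp : p.Prime) (x : ℕ) :
    Iq x p = ((1 + p ^ x : ℕ) : ℚ) / (p : ℚ) ^ x := by
  rw [Iq, sigmaX_prime hp]

theorem Iq_one_eq_iff {a n : ℕ} (ha : 0 < a) (hn : 0 < n) :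
    Iq 1 n = ((1 + a : ℕ) : ℚ) / (a : ℚ) ↔ sigmaX 1 n * a = (1 + a) * n := by
  rw [Iq, pow_one, div_eq_div_iff (by positivity) (by positivity)]
  exact_mod_cast Iff.rfl

theorem sigmaX_one_mul_ne_of_not_prime {a n : ℕ} (ha : 1 < a) (ha' : ¬ a.Prime) (hn : 0 < n) :
    sigmaX 1 n * a ≠ (1 + a) * n := by
  intro h
  have hcop : Coprime a (1 + a) := coprime_add_self_right.mpr (coprime_one_right a)
  have hdvd : a ∣ n := hcop.dvd_of_dvd_mul_left ⟨sigmaX 1 n, by rw [← h, mul_comm]⟩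
  obtain ⟨m, rfl⟩ := hdvd
  have hm : 0 < m := Nat.pos_of_mul_pos_left hn
  have hsigma : sigmaX 1 (a * m) = (1 + a) * m :=
    Nat.eq_of_mul_eq_mul_right (m := a) (by omega) (by rw [h]; ring)
  set d := a.minFac
  have hd_dvd : d ∣ a := minFac_dvd a
  have hd_one : 1 < d := (minFac_prime ha.ne').one_lt
  have hd_lt : d < a := (not_prime_iff_minFac_lt ha).mp ha'
  have hsub : ({m, d * m, a * m} : Finset ℕ) ⊆ (a * m).divisors := by
    intro e he
    simp only [mem_insert, mem_singleton] at he
    rw [mem_divisors]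
    refine ⟨?_, hn.ne'⟩
    rcases he with rfl | rfl | rfl
    · exact Dvd.intro_left a rfl
    · exact mul_dvd_mul_right hd_dvd m
    · exact dvd_rfl
  have hdm : m < d * m := lt_mul_left hm hd_one
  have hdam : d * m < a * m := Nat.mul_lt_mul_of_pos_right hd_lt hm
  have hle : ∑ e ∈ {m, d * m, a * m}, e ^ 1 ≤ sigmaX 1 (a * m) := sum_le_sum_of_subset hsub
  rw [sum_insert (by simp; omega), sum_insert (by simp; omega), sum_singleton, hsigma] at hle
  nlinarith

theorem stmt_17 (p x : ℕ) (hp : p.Prime) (hx : 1 < x) :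
    (¬ ∃ n : ℕ, 0 < n ∧ Iq 1 n = ((1 + p ^ x : ℕ) : ℚ) / (p : ℚ) ^ x) ∧
    (∃ n : ℕ, 0 < n ∧ Iq x n = ((1 + p ^ x : ℕ) : ℚ) / (p : ℚ) ^ x) := by
  have hpx : 1 < p ^ x := one_lt_pow (by omega) hp.one_lt
  refine ⟨?_, ⟨p, hp.pos, Iq_prime hp x⟩⟩
  rintro ⟨n, hn, h⟩
  have h' : Iq 1 n = ((1 + p ^ x : ℕ) : ℚ) / ((p ^ x : ℕ) : ℚ) := by rw [h, cast_pow]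
  exact sigmaX_one_mul_ne_of_not_prime hpx (Prime.not_prime_pow hx) hn
    ((Iq_one_eq_iff (by omega) hn).mp h')
end
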